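/- Let F be an m-admissible subalgebra of CB(S). Then: (i) for all A, B ∈ Z(F), int(cl ε(A)) ∩ int(cl ε(B)) = int(cl ε(A ∩ B)) (interiors and closures taken in S^F); and (ii) for every z-filter 𝒜 on F, the family 𝒜° is itself a z-filter on F. -/

import Mathlib

open Set Topology WeakDual BoundedContinuousFunction

noncomputable section

variable (S : Type*) [TopologicalSpace S] [T2Space S] [Semigroup S]

/-- Left translation `λ_s`, as a continuous map, given continuity of left translations. -/
def lamC (hl : ∀ s : S, Continuous (fun t => s * t)) (s : S) : C(S, S) :=
  ⟨fun t => s * t, hl s⟩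

/-- An m-admissible subalgebra of `CB(S) = S →ᵇ ℂ`. -/
structure MAdmissible (hl : ∀ s : S, Continuous (fun t => s * t)) : Type _ where
  carrier : StarSubalgebra ℂ (S →ᵇ ℂ)
  isClosed' : IsClosed (carrier : Set (S →ᵇ ℂ))
  leftInvariant : ∀ (s : S), ∀ f ∈ carrier, f.compContinuous (lamC S hl s) ∈ carrier
  mAdmissible : ∀ (μ : characterSpace ℂ carrier) (f : S →ᵇ ℂ) (hf : f ∈ carrier),
    ∃ g ∈ carrier, ∀ s : S,
      g s = μ ⟨f.compContinuous (lamC S hl s), leftInvariant s f hf⟩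

variable {hl : ∀ s : S, Continuous (fun t => s * t)}

/-- The spectrum `S^F` of an m-admissible subalgebra. -/
abbrev specF (F : MAdmissible S hl) : Type _ := characterSpace ℂ F.carrier

/-- Evaluation at a point, as an algebra homomorphism on `F`. -/
def evalHom (F : MAdmissible S hl) (s : S) : F.carrier →ₐ[ℂ] ℂ where
  toFun f := (f : S →ᵇ ℂ) s
  map_one' := rfl
  map_mul' _ _ := rfl
  map_zero' := rfl
  map_add' _ _ := rfl
  commutes' _ := rfl

/-- The evaluation map `ε : S → S^F`. -/
def epsF (F : MAdmissible S hl) (s : S) : specF S F :=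
  haveI : CompleteSpace F.carrier := F.isClosed'.isComplete.completeSpace_coe
  CharacterSpace.equivAlgHom.symm (evalHom S F s)

variable (F : MAdmissible S hl)

/-- `Z(F)`: the collection of zero sets of members of `F`. -/
def ZSet : Set (Set S) := {A | ∃ f ∈ F.carrier, A = {s : S | f s = 0}}

/-- z-filters on `F`. -/
def IsZFilter (𝒜 : Set (Set S)) : Prop :=
  𝒜 ⊆ ZSet S F ∧ ∅ ∉ 𝒜 ∧ Set.univ ∈ 𝒜 ∧
    (∀ A ∈ 𝒜, ∀ B ∈ 𝒜, A ∩ B ∈ 𝒜) ∧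
    ∀ A ∈ 𝒜, ∀ B ∈ ZSet S F, A ⊆ B → B ∈ 𝒜

/-- `FS`: the collection of z-ultrafilters on `F`. -/
def zUltra : Set (Set (Set S)) :=
  {p | IsZFilter S F p ∧ ∀ q, IsZFilter S F q → p ⊆ q → q = p}

/-- `cl ε(A)` in `S^F`. -/
def epsCl (A : Set S) : Set (specF S F) := closure (epsF S F '' A)

/-- `⋂_{A ∈ p} cl ε(A)`; for `p ∈ FS` this is the singleton of the corresponding point of `S^F`. -/
def core (p : Set (Set S)) : Set (specF S F) := ⋂ A ∈ p, epsCl S F A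

/-- `p̃ = ⋂ [p]`, the intersection of the equivalence class of `p`. -/
def tilde (p : Set (Set S)) : Set (Set S) :=
  ⋂₀ {q | q ∈ zUltra S F ∧ core S F q = core S F p}

/-- pure z-filters. -/
def IsPure (𝒜 : Set (Set S)) : Prop :=
  IsZFilter S F 𝒜 ∧ ∀ p ∈ zUltra S F, 𝒜 ⊆ p → 𝒜 ⊆ tilde S F p

/-- `bar(𝒜) = {p̃ : 𝒜 ⊆ p}`, viewed as a subset of `S^F` via the identification of
`p̃` with the point `μ` such that `⋂_{A ∈ p} cl ε(A) = {μ}`. -/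
def barSet (𝒜 : Set (Set S)) : Set (specF S F) :=
  {μ | ∃ p ∈ zUltra S F, 𝒜 ⊆ p ∧ core S F p = {μ}}

/-- `𝒜° = {A ∈ 𝒜 : bar(𝒜) ⊆ int cl ε(A)}`. -/
def circA (𝒜 : Set (Set S)) : Set (Set S) :=
  {A ∈ 𝒜 | barSet S F 𝒜 ⊆ interior (epsCl S F A)}

/-- `⋂ J`, the intersection of the z-filters `p̃` corresponding to points of `J ⊆ S^F`. -/
def interOf (J : Set (specF S F)) : Set (Set S) :=
  ⋂₀ {C | ∃ p ∈ zUltra S F, ∃ μ ∈ J, core S F p = {μ} ∧ C = tilde S F p}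

/-- `⋂ [p̃]_R` for a relation `r` on `S^F`. -/
def classInter (r : specF S F → specF S F → Prop) (μ : specF S F) : Set (Set S) :=
  interOf S F {ν | r μ ν}

/-- `Ω_ℬ(A) = {x ∈ S : λ_x⁻¹(A) ∈ ℬ}`. -/
def OmegaZ (ℬ : Set (Set S)) (A : Set S) : Set S := {x : S | (fun t => x * t) ⁻¹' A ∈ ℬ}

/-- `𝒜 + ℬ`. -/
def zsum (𝒜 ℬ : Set (Set S)) : Set (Set S) :=
  {A ∈ ZSet S F | ∀ F' ∈ ZSet S F, OmegaZ S ℬ A ⊆ F' → F' ∈ 𝒜}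

/-- `𝒜 ⊙ ℬ = ⋂ bar(𝒜 + ℬ)`. -/
def odot (𝒜 ℬ : Set (Set S)) : Set (Set S) :=
  interOf S F (barSet S F (zsum S F 𝒜 ℬ))

/-- topological choice functions for a set `Γ` of z-filters. -/
def IsTCF (Γ : Set (Set (Set S))) (f : Set (Set S) → Set S) : Prop :=
  ∀ L ∈ Γ, f L ∈ L ∧ barSet S F L ⊆ interior (epsCl S F (f L))

/-- `A* = {𝓛 ∈ Γ : bar(𝓛) ∩ cl ε(A) ≠ ∅}`. -/
def starSet (Γ : Set (Set (Set S))) (A : Set S) : Set Γ :=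
  {L : Γ | (barSet S F (L : Set (Set S)) ∩ epsCl S F A).Nonempty}

/-- `A_* = {𝓛 ∈ Γ : bar(𝓛) ⊆ cl ε(A)}`. -/
def lowStar (Γ : Set (Set (Set S))) (A : Set S) : Set Γ :=
  {L : Γ | barSet S F (L : Set (Set S)) ⊆ epsCl S F A}

/-- The `τ*` quotient topology on `Γ`. -/
def tauStar (Γ : Set (Set (Set S))) : TopologicalSpace Γ :=
  TopologicalSpace.generateFrom {U | ∃ A ∈ ZSet S F, U = (starSet S F Γ A)ᶜ}

/-- The `τ_*` quotient topology on `Γ`. -/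
def tauLow (Γ : Set (Set (Set S))) : TopologicalSpace Γ :=
  TopologicalSpace.generateFrom {U | ∃ A ∈ ZSet S F, U = (lowStar S F Γ A)ᶜ}

/-- `Γ` is a quotient of `S^F`: conditions (a) and (b) of Theorem 3.9. -/
def IsQuotientOf (Γ : Set (Set (Set S))) : Prop :=
  (∀ L ∈ Γ, IsPure S F L) ∧
  (∀ f : Set (Set S) → Set S, IsTCF S F Γ f →
    ∃ 𝓕 : Finset (Set (Set S)), ↑𝓕 ⊆ Γ ∧
      (Set.univ : Set (specF S F)) = ⋃ L ∈ 𝓕, interior (epsCl S F (f L))) ∧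
  (∀ L ∈ Γ, ∀ K ∈ Γ, L ≠ K →
    ∃ A ∈ circA S F L, ∃ B ∈ circA S F K, ∀ C ∈ Γ,
      (∀ H ∈ ZSet S F, (interior (epsCl S F A))ᶜ ⊆ interior (epsCl S F H) → H ∈ C) ∨
      (∀ T ∈ ZSet S F, (interior (epsCl S F B))ᶜ ⊆ interior (epsCl S F T) → T ∈ C))

/-- The defining property of the map `γ : S^F → Γ` sending `p̃` to the unique member of `Γ`
contained in `p̃`. -/
def IsGamma (Γ : Set (Set (Set S))) (γ : specF S F → Γ) : Prop :=
  ∀ (μ : specF S F) (p : Set (Set S)), p ∈ zUltra S F → core S F p = {μ} →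
    (γ μ : Set (Set S)) ⊆ tilde S F p

/-- The defining property of the multiplication of `S^F`: `(μν)(f) = μ(T_ν f)` where
`(T_ν f)(s) = ν(L_s f)`. -/
def IsSpecMul (mul : specF S F → specF S F → specF S F) : Prop :=
  ∀ (μ ν : specF S F) (f : S →ᵇ ℂ) (hf : f ∈ F.carrier) (g : S →ᵇ ℂ) (hg : g ∈ F.carrier),
    (∀ s : S, g s = ν ⟨f.compContinuous (lamC S hl s), F.leftInvariant s f hf⟩) →
    mul μ ν ⟨f, hf⟩ = μ ⟨g, hg⟩

/-- `LMC(S)`, as a subset of `CB(S)`. -/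
def LMCset (hl : ∀ s : S, Continuous (fun t => s * t)) : Set (S →ᵇ ℂ) :=
  {f | ∀ μ : characterSpace ℂ (S →ᵇ ℂ),
    Continuous fun s : S => μ (f.compContinuous (lamC S hl s))}


/-!
`ε(S)` is dense in `S^F`: a point outside `cl ε(S)` would be separated from it by an Urysohn
function, which by Gelfand duality is the transform of some `f ∈ F`; but `f` vanishes on `S`.
A zero set `A = Z(f)` is recovered from its closure, `ε⁻¹(cl ε(A)) = A`, because `μ ↦ μ(f)` is
continuous. Since an open subset `U` of a space with dense subset `D` lies in `cl (U ∩ D)`, the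
open set `int cl ε(A) ∩ int cl ε(B)` lies in the closure of its trace on `ε(S)`, which is
contained in `ε(A ∩ B)`. Part (ii) follows from (i) together with `cl ε(S) = S^F`.
-/

theorem interior_closure_image_inter_of_denseRange {X Y : Type*} [TopologicalSpace Y]
    {e : X → Y} (he : DenseRange e) {A B : Set X}
    (hA : e ⁻¹' closure (e '' A) ⊆ A) (hB : e ⁻¹' closure (e '' B) ⊆ B) :
    interior (closure (e '' A)) ∩ interior (closure (e '' B)) =
      interior (closure (e '' (A ∩ B))) := by
  refine Subset.antisymm ?_ (subset_inter
    (interior_mono (closure_mono (image_mono inter_subset_left)))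
    (interior_mono (closure_mono (image_mono inter_subset_right))))
  have hopen : IsOpen (interior (closure (e '' A)) ∩ interior (closure (e '' B))) :=
    isOpen_interior.inter isOpen_interior
  refine interior_maximal ((he.open_subset_closure_inter hopen).trans (closure_mono ?_)) hopen
  rintro - ⟨⟨hsA, hsB⟩, s, rfl⟩
  exact ⟨s, ⟨hA (show e s ∈ closure (e '' A) from interior_subset hsA),
    hB (show e s ∈ closure (e '' B) from interior_subset hsB)⟩, rfl⟩

omit [T2Space S] in
theorem denseRange_epsF : DenseRange (epsF S F) := by
  have : IsClosed (F.carrier : Set (S →ᵇ ℂ)) := F.isClosed'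
  refine dense_iff_closure_eq.2 (eq_univ_of_forall fun μ => by_contra fun hμ => ?_)
  obtain ⟨g, hg0, hg1, -⟩ := exists_continuous_zero_one_of_isClosed isClosed_closure
    (isClosed_singleton (x := μ)) (disjoint_singleton_right.2 hμ)
  obtain ⟨f, hf⟩ := (gelfandStarTransform F.carrier).surjective
    ((ContinuousMap.mk ((↑) : ℝ → ℂ) Complex.continuous_ofReal).comp g)
  have hf_apply (ν : specF S F) : gelfandStarTransform F.carrier f ν = g ν := by
    rw [show gelfandStarTransform F.carrier f = _ from hf]; rfl
  have hf_zero : f = 0 := by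
    ext1; ext s
    have : gelfandStarTransform F.carrier f (epsF S F s) = (f : S →ᵇ ℂ) s := rfl
    rw [← this, hf_apply, hg0 (subset_closure (mem_range_self s))]
    rfl
  have hμ_one := hf_apply μ
  rw [hf_zero, map_zero, hg1 rfl] at hμ_one
  simp at hμ_one

omit [T2Space S] in
theorem preimage_epsF_epsCl_subset {A : Set S} (hA : A ∈ ZSet S F) :
    epsF S F ⁻¹' epsCl S F A ⊆ A := by
  obtain ⟨f, hf, rfl⟩ := hA
  have hclosed : IsClosed {μ : specF S F | μ ⟨f, hf⟩ = 0} :=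
    isClosed_eq ((eval_continuous (⟨f, hf⟩ : F.carrier)).comp continuous_subtype_val)
      continuous_const
  intro s hs
  exact closure_minimal (image_subset_iff.2 fun _ ha => ha) hclosed hs

omit [T2Space S] in
theorem interior_epsCl_inter {A B : Set S} (hA : A ∈ ZSet S F) (hB : B ∈ ZSet S F) :
    interior (epsCl S F A) ∩ interior (epsCl S F B) = interior (epsCl S F (A ∩ B)) :=
  interior_closure_image_inter_of_denseRange (denseRange_epsF S F)
    (preimage_epsF_epsCl_subset S F hA) (preimage_epsF_epsCl_subset S F hB)

omit [T2Space S] in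
theorem isZFilter_circA {𝒜 : Set (Set S)} (h𝒜 : IsZFilter S F 𝒜) :
    IsZFilter S F (circA S F 𝒜) := by
  obtain ⟨hZ, hempty, huniv, hinter, hup⟩ := h𝒜
  have hepsCl_univ : epsCl S F univ = univ := by
    rw [epsCl, image_univ, (denseRange_epsF S F).closure_range]
  refine ⟨fun A hA => hZ hA.1, fun h => hempty h.1, ⟨huniv, ?_⟩,
    fun A hA B hB => ⟨hinter A hA.1 B hB.1, ?_⟩,
    fun A hA B hB hAB => ⟨hup A hA.1 B hB hAB,
      hA.2.trans (interior_mono (closure_mono (image_mono hAB)))⟩⟩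
  · rw [hepsCl_univ, interior_univ]
    exact subset_univ _
  · rw [← interior_epsCl_inter S F (hZ hA.1) (hZ hB.1)]
    exact subset_inter hA.2 hB.2

theorem statement15 :
    (∀ A ∈ ZSet S F, ∀ B ∈ ZSet S F,
        interior (epsCl S F A) ∩ interior (epsCl S F B) = interior (epsCl S F (A ∩ B))) ∧
      ∀ 𝒜 : Set (Set S), IsZFilter S F 𝒜 → IsZFilter S F (circA S F 𝒜) :=
  ⟨fun _ hA _ hB => interior_epsCl_inter S F hA hB, fun _ => isZFilter_circA S F⟩

end
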